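/- Let V_w ∈ R^{N×k} have full QR decomposition V_w = (F₁ F₂)(Rᵀ 0ᵀ)ᵀ with (F₁ F₂) orthogonal and R invertible. Let Φ_w ∈ R^{N×N} be symmetric PSD, n, λ > 0, and Y ∈ R^N. Define β̂_w = F₂(F₂ᵀΦ_w F₂ + nλI)^{-1}F₂ᵀY and α̂ = R^{-1}(F₁ᵀY − F₁ᵀΦ_w β̂_w). Then (α̂, β̂_w) solve the system V_wᵀ β̂_w = 0 and Y − V_w α̂ − (Φ_w + nλI) β̂_w = 0. -/

import Mathlib

open Matrix

/-
With `z = M⁻¹ F₂ᵀ Y`, where `M = F₂ᵀ Φ F₂ + nλ I` (positive definite, hence invertible), we have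
`β̂ = F₂ z`, so `V_wᵀ β̂ = Rᵀ (F₁ᵀ F₂) z = 0`. Since `R R⁻¹ = I` and `I − F₁F₁ᵀ = F₂F₂ᵀ`, the residual
of the second equation is `F₂ (F₂ᵀ Y − F₂ᵀ Φ F₂ z − nλ z) = F₂ (F₂ᵀ Y − M z) = 0`.
-/

lemma posDef_transpose_mul_mul_add_smul_one {ι κ : Type*} [Fintype ι] [Fintype κ]
    [DecidableEq κ] {Φ : Matrix ι ι ℝ} (hΦ : Φ.PosSemidef) (F : Matrix ι κ ℝ) {c : ℝ}
    (hc : 0 < c) : (Fᵀ * Φ * F + c • 1).PosDef := by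
  have hPSD : (Fᵀ * Φ * F).PosSemidef := by
    simpa only [conjTranspose_eq_transpose_of_trivial] using hΦ.conjTranspose_mul_mul_same F
  have hscalar : (c • (1 : Matrix κ κ ℝ)).PosDef := by
    rw [smul_one_eq_diagonal]
    exact posDef_diagonal_iff.mpr fun _ => hc
  rw [add_comm]
  exact hscalar.add_posSemidef hPSD

section Algebra

variable {α ι κ μ ρ : Type*} [CommRing α] [Fintype ι] [Fintype κ] [Fintype μ]

lemma mul_transpose_mul_sub_mul_eq_smul_of_eq_mul_inv [DecidableEq κ] {F : Matrix ι κ α}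
    {Φ : Matrix ι ι α} {c : α} {Y β : Matrix ι ρ α} (hM : IsUnit (Fᵀ * Φ * F + c • 1).det)
    (hβ : β = F * (Fᵀ * Φ * F + c • 1)⁻¹ * Fᵀ * Y) :
    F * Fᵀ * (Y - Φ * β) = c • β := by
  have hMz : (Fᵀ * Φ * F + c • 1) * ((Fᵀ * Φ * F + c • 1)⁻¹ * (Fᵀ * Y)) = Fᵀ * Y := by
    rw [← Matrix.mul_assoc, mul_nonsing_inv _ hM, Matrix.one_mul]
  rw [hβ, show F * (Fᵀ * Φ * F + c • 1)⁻¹ * Fᵀ * Y = F * ((Fᵀ * Φ * F + c • 1)⁻¹ * (Fᵀ * Y)) by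
    simp only [Matrix.mul_assoc]]
  generalize (Fᵀ * Φ * F + c • 1)⁻¹ * (Fᵀ * Y) = z at hMz ⊢
  rw [Matrix.add_mul, Matrix.smul_mul, Matrix.one_mul] at hMz
  calc F * Fᵀ * (Y - Φ * (F * z)) = F * (Fᵀ * Y - Fᵀ * Φ * F * z) := by
        simp only [Matrix.mul_sub, Matrix.mul_assoc]
    _ = c • (F * z) := by rw [← hMz, add_sub_cancel_left, Matrix.mul_smul]

lemma sub_mul_transpose_mul_sub_eq [DecidableEq ι] {F₁ : Matrix ι κ α} {F₂ : Matrix ι μ α}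
    (hcomplete : F₁ * F₁ᵀ + F₂ * F₂ᵀ = 1) (Φ : Matrix ι ι α) (c : α) (Y β : Matrix ι ρ α) :
    Y - F₁ * (F₁ᵀ * Y - F₁ᵀ * Φ * β) - (Φ + c • 1) * β = F₂ * F₂ᵀ * (Y - Φ * β) - c • β := by
  have hF₂ : F₂ * F₂ᵀ = 1 - F₁ * F₁ᵀ := eq_sub_of_add_eq' hcomplete
  rw [hF₂]
  simp only [Matrix.sub_mul, Matrix.mul_sub, Matrix.add_mul, Matrix.one_mul, Matrix.smul_mul,
    Matrix.mul_assoc]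
  abel

end Algebra

theorem qr_solution_solves_system_general {N k m : ℕ}
    (F₁ : Matrix (Fin N) (Fin k) ℝ) (F₂ : Matrix (Fin N) (Fin m) ℝ)
    (hF₁₂ : F₁ᵀ * F₂ = 0)
    (hcomplete : F₁ * F₁ᵀ + F₂ * F₂ᵀ = 1)
    (R : Matrix (Fin k) (Fin k) ℝ) (hR : IsUnit R.det)
    (Vw : Matrix (Fin N) (Fin k) ℝ) (hVw : Vw = F₁ * R)
    (Φw : Matrix (Fin N) (Fin N) ℝ) (hΦw : Φw.PosSemidef)
    (n lam : ℝ) (hn : 0 < n) (hlam : 0 < lam)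
    (Y : Matrix (Fin N) (Fin 1) ℝ)
    (βw : Matrix (Fin N) (Fin 1) ℝ)
    (hβw : βw = F₂ * (F₂ᵀ * Φw * F₂ + (n * lam) • 1)⁻¹ * F₂ᵀ * Y)
    (α : Matrix (Fin k) (Fin 1) ℝ)
    (hα : α = R⁻¹ * (F₁ᵀ * Y - F₁ᵀ * Φw * βw)) :
    Vwᵀ * βw = 0 ∧ Y - Vw * α - (Φw + (n * lam) • 1) * βw = 0 := by
  have hM : IsUnit (F₂ᵀ * Φw * F₂ + (n * lam) • 1).det :=
    (posDef_transpose_mul_mul_add_smul_one hΦw F₂ (mul_pos hn hlam)).det_pos.ne'.isUnit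
  have hVwα : Vw * α = F₁ * (F₁ᵀ * Y - F₁ᵀ * Φw * βw) := by
    rw [hVw, hα, Matrix.mul_assoc, ← Matrix.mul_assoc R, mul_nonsing_inv R hR, Matrix.one_mul]
  constructor
  · rw [hVw, hβw]
    simp only [transpose_mul, Matrix.mul_assoc, ← Matrix.mul_assoc F₁ᵀ F₂, hF₁₂,
      Matrix.zero_mul, Matrix.mul_zero]
  · rw [hVwα, sub_mul_transpose_mul_sub_eq hcomplete,
      mul_transpose_mul_sub_mul_eq_smul_of_eq_mul_inv hM hβw, sub_self]

/-- The explicit solution (α̂, β̂_w) from the QR decomposition solves the system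
V_wᵀβ̂_w = 0 and Y − V_wα̂ − (Φ_w + nλI)β̂_w = 0. -/
theorem qr_solution_solves_system {N k m : ℕ}
    (F₁ : Matrix (Fin N) (Fin k) ℝ) (F₂ : Matrix (Fin N) (Fin m) ℝ)
    (hF₁ : F₁ᵀ * F₁ = 1) (hF₂ : F₂ᵀ * F₂ = 1) (hF₁₂ : F₁ᵀ * F₂ = 0)
    (hcomplete : F₁ * F₁ᵀ + F₂ * F₂ᵀ = 1)
    (R : Matrix (Fin k) (Fin k) ℝ) (hR : IsUnit R.det)
    (Vw : Matrix (Fin N) (Fin k) ℝ) (hVw : Vw = F₁ * R)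
    (Φw : Matrix (Fin N) (Fin N) ℝ) (hΦw : Φw.PosSemidef)
    (n lam : ℝ) (hn : 0 < n) (hlam : 0 < lam)
    (Y : Matrix (Fin N) (Fin 1) ℝ)
    (βw : Matrix (Fin N) (Fin 1) ℝ)
    (hβw : βw = F₂ * (F₂ᵀ * Φw * F₂ + (n * lam) • 1)⁻¹ * F₂ᵀ * Y)
    (α : Matrix (Fin k) (Fin 1) ℝ)
    (hα : α = R⁻¹ * (F₁ᵀ * Y - F₁ᵀ * Φw * βw)) :
    Vwᵀ * βw = 0 ∧ Y - Vw * α - (Φw + (n * lam) • 1) * βw = 0 :=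
  qr_solution_solves_system_general F₁ F₂ hF₁₂ hcomplete R hR Vw hVw Φw hΦw n lam hn hlam Y βw hβw α
    hα
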